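/- arXiv:1011.1057 — 7 statements merged into one kernel-verified Lean document; each statement's English description precedes it below -/
import Mathlib

section
/- Let A be a finite abelian group of order n and f : ℤ → A a polynomial map of degree at most d (all (d+1)-fold difference operators annihilate f). Then f is periodic with period n^d, i.e., f(m + n^d) = f(m) for all m ∈ ℤ. -/
/-- Additive difference operator `Δ_t f (x) = f (x+t) - f x`. -/
def addDeriv {H A : Type*} [AddCommGroup H] [AddCommGroup A] (f : H → A) (t : H) : H → A :=
  fun x => f (x + t) - f x

/-- `f : H → A` is a polynomial map of degree at most `k`: all `(k+1)`-fold
difference operators annihilate it. -/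
def IsPolyMap {H A : Type*} [AddCommGroup H] [AddCommGroup A] (k : ℕ) (f : H → A) : Prop :=
  ∀ t : Fin (k + 1) → H, ∀ x, ((List.ofFn t).foldl addDeriv f) x = 0

lemma isPolyMap_deriv {H A : Type*} [AddCommGroup H] [AddCommGroup A] (k : ℕ)
    (f : H → A) (hf : IsPolyMap (k + 1) f) (s : H) : IsPolyMap k (addDeriv f s) := by
  intro t x
  have := hf (Fin.cons s t) x
  rwa [List.ofFn_succ, Fin.cons_zero, List.foldl_cons] at this
  -- note Fin.cons_succ may be needed to identify tails
  -- simp handles it if needed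

lemma key {A : Type*} [AddCommGroup A] [Fintype A] :
    ∀ (d : ℕ) (f : ℤ → A), IsPolyMap d f →
      ∀ m : ℤ, f (m + (Fintype.card A : ℤ) ^ d) = f m := by
  intro d
  induction d with
  | zero =>
    intro f hf m
    have := hf (fun _ => (1 : ℤ)) m
    simp only [List.ofFn_succ, List.ofFn_zero, List.foldl_cons, List.foldl_nil, addDeriv] at this
    rw [pow_zero]
    exact sub_eq_zero.mp this
  | succ d ih =>
    intro f hf m
    set p : ℤ := (Fintype.card A : ℤ) ^ d with hp
    set g := addDeriv f p with hg
    have hgpoly : IsPolyMap d g := isPolyMap_deriv d f hf p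
    have hper : ∀ m : ℤ, g (m + p) = g m := ih g hgpoly
    have hper' : ∀ (k : ℕ) (m : ℤ), g (m + k * p) = g m := by
      intro k
      induction k with
      | zero => simp
      | succ k ihk =>
        intro m
        have : m + (k + 1 : ℕ) * p = (m + k * p) + p := by push_cast; ring
        rw [this, hper, ihk]
    have hsum : ∀ (k : ℕ) (m : ℤ), f (m + k * p) = f m + k • g m := by
      intro k
      induction k with
      | zero => simp
      | succ k ihk =>
        intro m
        have h1 : m + (k + 1 : ℕ) * p = (m + k * p) + p := by push_cast; ring
        have h2 : f ((m + k * p) + p) = f (m + k * p) + g (m + k * p) := by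
          simp [hg, addDeriv]
        rw [h1, h2, ihk, hper' k m, succ_nsmul, add_assoc]
    have hn : (Fintype.card A : ℤ) ^ (d + 1) = (Fintype.card A : ℕ) * p := by
      rw [hp, pow_succ]; ring
    rw [hn, hsum, card_nsmul_eq_zero, add_zero]

/-- A polynomial map of degree at most  into a finite abelian group of
order  is -periodic. -/
theorem stmt_5 {A : Type*} [AddCommGroup A] [Fintype A] (d : ℕ) (f : ℤ → A)
    (hf : IsPolyMap d f) :
    ∀ m : ℤ, f (m + (Fintype.card A : ℤ) ^ d) = f m :=
  key d f hf
end

section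
/- Let A be an abelian group of exponent e (i.e., e·x = 0 for all x ∈ A) and let f : ℤⁿ → A be a polynomial map of degree at most k. Then f factors through (ℤ/e^k ℤ)ⁿ; that is, f(x) = f(y) whenever x ≡ y (mod e^k) coordinatewise. -/
lemma addDeriv_comm {H A : Type*} [AddCommGroup H] [AddCommGroup A] (f : H → A) (s t : H) :
    addDeriv (addDeriv f s) t = addDeriv (addDeriv f t) s := by
  funext x
  simp only [addDeriv]
  rw [add_right_comm]
  abel

lemma isPolyMap_addDeriv {H A : Type*} [AddCommGroup H] [AddCommGroup A] {k : ℕ}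
    {f : H → A} (hf : IsPolyMap (k + 1) f) (t : H) : IsPolyMap k (addDeriv f t) := by
  intro s x
  have := hf (Fin.cons t s) x
  rw [List.ofFn_succ, Fin.cons_zero, List.foldl_cons] at this
  simp only [Fin.cons_succ] at this
  exact this

/-- Telescoping: if `addDeriv f v` is constantly `c`, then `f (x + m • v) - f x = m • c`. -/
lemma telescope {H A : Type*} [AddCommGroup H] [AddCommGroup A] (f : H → A) (v : H) (c : A)
    (hc : ∀ x, addDeriv f v x = c) (m : ℕ) (x : H) : f (x + m • v) = f x + m • c := by
  induction m with
  | zero => simp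
  | succ m ih =>
      have h := hc (x + m • v)
      simp only [addDeriv] at h
      rw [sub_eq_iff_eq_add'] at h
      rw [succ_nsmul, ← add_assoc, h, ih, succ_nsmul]
      abel

lemma key_s7 {A : Type*} [AddCommGroup A] (e : ℕ) (he : ∀ x : A, e • x = 0) (n : ℕ) :
    ∀ k : ℕ, ∀ f : (Fin n → ℤ) → A, IsPolyMap k f →
      ∀ t x : Fin n → ℤ, f (x + (e ^ k) • t) = f x := by
  intro k
  induction k with
  | zero =>
      intro f hf t x
      have := hf (fun _ => t) x
      simp only [List.ofFn_succ, List.ofFn_zero, List.foldl_cons, List.foldl_nil, addDeriv] at this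
      have h : f (x + t) = f x := by rwa [sub_eq_zero] at this
      simpa using h
  | succ k ih =>
      intro f hf t x
      -- h := addDeriv f (e^k • t) is constant
      set v : Fin n → ℤ := (e ^ k) • t with hv
      have hconst : ∀ y, addDeriv f v y = addDeriv f v x := by
        intro y
        have h1 : ∀ s z, addDeriv (addDeriv f v) s z = 0 := by
          intro s z
          have := congrFun (addDeriv_comm f v s) z
          rw [this]
          show addDeriv f s (z + v) - addDeriv f s z = 0
          rw [ih (addDeriv f s) (isPolyMap_addDeriv hf s) t z, sub_self]
        -- so addDeriv f v is constant
        have h2 := h1 (x - y) y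
        show addDeriv f v y = addDeriv f v x
        have : addDeriv f v (y + (x - y)) - addDeriv f v y = 0 := h2
        rw [add_sub_cancel] at this
        exact (sub_eq_zero.mp this).symm
      have htel := telescope f v (addDeriv f v x) hconst e x
      rw [he] at htel
      have hsmul : e • v = (e ^ (k + 1)) • t := by
        rw [hv, smul_smul, ← pow_succ']
      rw [hsmul] at htel
      rw [htel, add_zero]

/-- A polynomial map of degree at most  from  into an abelian group of
exponent  factors through . -/
theorem stmt_7 {A : Type*} [AddCommGroup A] (e : ℕ) (he0 : 0 < e)
    (he : ∀ x : A, e • x = 0) (n k : ℕ) (f : (Fin n → ℤ) → A)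
    (hf : IsPolyMap k f) :
    ∀ x y : Fin n → ℤ, (∀ i, ((e : ℤ) ^ k) ∣ (x i - y i)) → f x = f y := by
  intro x y hdvd
  choose d hd using hdvd
  have hx : x = y + (e ^ k) • d := by
    funext i
    have := hd i
    simp only [Pi.add_apply, Pi.smul_apply]
    rw [nsmul_eq_mul]
    push_cast
    linarith
  rw [hx, key_s7 e he n k f hf d y]
end

section
/- Let A, B be abelian groups and π : B → A a surjective homomorphism. Every polynomial map f : ℤⁿ → A of degree at most k lifts to a polynomial map g : ℤⁿ → B of degree at most k with π ∘ g = f. -/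
/-!
By Newton's forward difference formula in an integer coordinate, a polynomial map of degree
at most `m` on `ℤ × H` is `f (t, y) = ∑_{j ≤ m} C(t, j) • Δ^j f (0, y)`, and the coefficient
`y ↦ Δ^j f (0, y)` is a polynomial map of degree at most `m - j` on `H`. Lifting these
coefficients (by induction on the rank) and multiplying them back by the binomial coefficients,
which are polynomial of degree `j`, gives a lift of degree at most `m` by the Leibniz rule.
On `ℤ⁰` the map is constant and lifts by surjectivity of `π`.
-/

open Finset Function fwdDiff

section FwdDiff

variable {H H' A B : Type*} [AddCommGroup H] [AddCommGroup H'] [AddCommGroup A] [AddCommGroup B]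

theorem fwdDiff_add_eq_add_shift (f : H → A) (a b : H) :
    Δ_[a + b] f = Δ_[a] f + fun x => Δ_[b] f (x + a) := by
  ext x
  simp only [fwdDiff, Pi.add_apply, add_assoc]
  abel

theorem fwdDiff_neg_eq_neg_shift (f : H → A) (a : H) :
    Δ_[-a] f = -fun x => Δ_[a] f (x + -a) := by
  ext x
  simp only [fwdDiff, Pi.neg_apply, neg_add_cancel_right]
  abel

theorem fwdDiff_smul_eq_add_shift (c : H → ℤ) (g : H → B) (t : H) :
    Δ_[t] (c • g) = (fun x => c (x + t)) • Δ_[t] g + Δ_[t] c • g := by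
  ext x
  simp only [fwdDiff, Pi.add_apply, Pi.smul_apply', smul_sub, sub_smul]
  abel

theorem fwdDiff_iter_comp_addMonoidHom (f : H → A) (L : H' →+ H) (t : H') (j : ℕ) (x : H') :
    Δ_[t] ^[j] (f ∘ L) x = Δ_[L t] ^[j] f (L x) := by
  simp [fwdDiff_iter_eq_sum_shift, map_nsmul]

end FwdDiff

section PolyMap

variable {H H' A B : Type*} [AddCommGroup H] [AddCommGroup H'] [AddCommGroup A] [AddCommGroup B]
  {k : ℕ}

theorem isPolyMap_zero_iff {f : H → A} : IsPolyMap 0 f ↔ ∀ t, Δ_[t] f = 0 := by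
  simp only [IsPolyMap, List.ofFn_succ, List.ofFn_zero, List.foldl_cons, List.foldl_nil]
  exact ⟨fun h t => funext (h fun _ => t), fun h t => congr_fun (h (t 0))⟩

theorem isPolyMap_succ_iff {f : H → A} :
    IsPolyMap (k + 1) f ↔ ∀ t, IsPolyMap k (Δ_[t] f) := by
  refine ⟨fun h t u x => ?_, fun h t x => ?_⟩
  · have := h (Fin.cons t u) x
    rwa [List.ofFn_cons, List.foldl_cons] at this
  · rw [List.ofFn_succ, List.foldl_cons]
    exact h (t 0) (fun i => t i.succ) x

theorem IsPolyMap.eq_const {f : H → A} (hf : IsPolyMap 0 f) : f = fun _ => f 0 := by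
  ext x
  simpa [fwdDiff, sub_eq_zero] using congr_fun (isPolyMap_zero_iff.1 hf x) 0

theorem IsPolyMap.of_intertwines {T : (H → A) → (H' → B)} (hT₀ : T 0 = 0)
    (hT : ∀ f t, ∃ s, Δ_[t] (T f) = T (Δ_[s] f)) {f : H → A} (hf : IsPolyMap k f) :
    IsPolyMap k (T f) := by
  induction k generalizing f with
  | zero =>
    refine isPolyMap_zero_iff.2 fun t => ?_
    obtain ⟨s, hs⟩ := hT f t
    rw [hs, isPolyMap_zero_iff.1 hf s, hT₀]
  | succ k ih =>
    refine isPolyMap_succ_iff.2 fun t => ?_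
    obtain ⟨s, hs⟩ := hT f t
    exact hs ▸ ih (isPolyMap_succ_iff.1 hf s)

theorem IsPolyMap.map {f : H → A} (ψ : A →+ B) (hf : IsPolyMap k f) : IsPolyMap k (ψ ∘ f) :=
  hf.of_intertwines (T := (ψ ∘ ·)) (funext fun _ => map_zero ψ)
    fun f t => ⟨t, funext fun x => by simp [fwdDiff]⟩

theorem IsPolyMap.comp {f : H → A} (L : H' →+ H) (hf : IsPolyMap k f) : IsPolyMap k (f ∘ L) :=
  hf.of_intertwines (T := (· ∘ L)) rfl
    fun f t => ⟨L t, funext fun x => fwdDiff_iter_comp_addMonoidHom f L t 1 x⟩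

theorem IsPolyMap.comp_add {f : H → A} (c : H) (hf : IsPolyMap k f) :
    IsPolyMap k fun x => f (x + c) :=
  hf.of_intertwines (T := fun f x => f (x + c)) rfl
    fun f t => ⟨t, funext fun x => fwdDiff_comp_add t f c x⟩

theorem IsPolyMap.neg {f : H → A} (hf : IsPolyMap k f) : IsPolyMap k (-f) :=
  hf.map (-AddMonoidHom.id A)

theorem IsPolyMap.const (a : A) : IsPolyMap k fun _ : H => a := by
  induction k generalizing a with
  | zero => exact isPolyMap_zero_iff.2 fun t => fwdDiff_const t a
  | succ k ih => exact isPolyMap_succ_iff.2 fun t => (fwdDiff_const t a).symm ▸ ih 0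

theorem IsPolyMap.zero : IsPolyMap k (0 : H → A) :=
  IsPolyMap.const 0

theorem IsPolyMap.add {f g : H → A} (hf : IsPolyMap k f) (hg : IsPolyMap k g) :
    IsPolyMap k (f + g) := by
  induction k generalizing f g with
  | zero =>
    rw [isPolyMap_zero_iff] at *
    intro t
    rw [fwdDiff_add, hf t, hg t, add_zero]
  | succ k ih =>
    rw [isPolyMap_succ_iff] at *
    intro t
    rw [fwdDiff_add]
    exact ih (hf t) (hg t)

theorem IsPolyMap.fwdDiff {f : H → A} (hf : IsPolyMap k f) (t : H) :
    IsPolyMap (k - 1) (Δ_[t] f) := by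
  cases k with
  | zero => exact (isPolyMap_zero_iff.1 hf t).symm ▸ IsPolyMap.zero
  | succ k => exact isPolyMap_succ_iff.1 hf t

theorem IsPolyMap.fwdDiff_iter {f : H → A} (hf : IsPolyMap k f) (t : H) (j : ℕ) :
    IsPolyMap (k - j) (Δ_[t] ^[j] f) := by
  induction j generalizing k f with
  | zero => exact hf
  | succ j ih =>
    rw [iterate_succ_apply, Nat.sub_succ', Nat.sub_right_comm]
    exact ih (hf.fwdDiff t)

theorem IsPolyMap.smul {p q : ℕ} {c : H → ℤ} {g : H → B} (hc : IsPolyMap p c)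
    (hg : IsPolyMap q g) : IsPolyMap (p + q) (c • g) := by
  induction p generalizing q c g with
  | zero =>
    rw [hc.eq_const, zero_add]
    exact hg.map (DistribSMul.toAddMonoidHom B (c 0))
  | succ p ihp =>
    induction q generalizing c g with
    | zero =>
      rw [hg.eq_const]
      exact hc.map (zmultiplesHom B (g 0))
    | succ q ihq =>
      rw [show p + 1 + (q + 1) = p + (q + 1) + 1 by omega]
      refine isPolyMap_succ_iff.2 fun t => ?_
      rw [fwdDiff_smul_eq_add_shift]
      have h₁ := ihq (hc.comp_add t) (isPolyMap_succ_iff.1 hg t)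
      have h₂ := ihp (isPolyMap_succ_iff.1 hc t) hg
      rw [show p + 1 + q = p + (q + 1) by omega] at h₁
      exact h₁.add h₂

end PolyMap

section Int

variable {H A : Type*} [AddCommGroup H] [AddCommGroup A] {k m : ℕ}

theorem isPolyMap_succ_of_fwdDiff_one {φ : ℤ → A} (h : IsPolyMap k (Δ_[1] φ)) :
    IsPolyMap (k + 1) φ := by
  have h_neg : IsPolyMap k (Δ_[-1] φ) := by
    rw [fwdDiff_neg_eq_neg_shift]
    exact (h.comp_add (-1)).neg
  refine isPolyMap_succ_iff.2 fun t => ?_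
  induction t using Int.induction_on with
  | zero =>
    have : Δ_[(0 : ℤ)] φ = 0 := by ext; simp [fwdDiff]
    exact this ▸ IsPolyMap.zero
  | succ t ih => exact (fwdDiff_add_eq_add_shift φ _ 1).symm ▸ ih.add (h.comp_add _)
  | pred t ih =>
    rw [sub_eq_add_neg, fwdDiff_add_eq_add_shift]
    exact ih.add (h_neg.comp_add _)

theorem isPolyMap_choose (j : ℕ) : IsPolyMap j fun x : ℤ => Ring.choose x j := by
  induction j with
  | zero => simpa only [Ring.choose_zero_right] using IsPolyMap.const (1 : ℤ)
  | succ j ih =>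
    refine isPolyMap_succ_of_fwdDiff_one ?_
    have : Δ_[1] (fun x : ℤ => Ring.choose x (j + 1)) = fun x => Ring.choose x j := by
      ext x
      simp [fwdDiff, Ring.choose_succ_succ]
    exact this ▸ ih

theorem IsPolyMap.eq_sum_fwdDiff_iter {φ : ℤ → A} (hφ : IsPolyMap m φ) (t : ℤ) :
    φ t = ∑ j ∈ range (m + 1), Ring.choose t j • Δ_[1] ^[j] φ 0 := by
  induction m generalizing φ t with
  | zero => simpa [Ring.choose_zero_right] using congr_fun hφ.eq_const t
  | succ m ih =>
    set F : ℤ → A := fun t => ∑ j ∈ range (m + 2), Ring.choose t j • Δ_[1] ^[j] φ 0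
    have hF : ∀ t, F (t + 1) - F t = φ (t + 1) - φ t := fun t => by
      calc F (t + 1) - F t
          = ∑ j ∈ range (m + 2), (Ring.choose (t + 1) j - Ring.choose t j) • Δ_[1] ^[j] φ 0 := by
            simp only [F, ← sum_sub_distrib, sub_smul]
        _ = ∑ j ∈ range (m + 1), Ring.choose t j • Δ_[1] ^[j] (Δ_[1] φ) 0 := by
            simp [sum_range_succ' _ (m + 1), Ring.choose_succ_succ, iterate_succ_apply]
        _ = φ (t + 1) - φ t := (ih (isPolyMap_succ_iff.1 hφ 1) t).symm
    have h_periodic : Periodic (φ - F) 1 := fun t => by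
      simp only [Pi.sub_apply]
      rw [sub_eq_sub_iff_sub_eq_sub, hF]
    have hF₀ : F 0 = φ 0 := by simp [F, Ring.choose_zero_ite]
    simpa [hF₀, sub_eq_zero] using h_periodic.int_mul_eq t

theorem IsPolyMap.eq_sum_fwdDiff_iter_prod {f : ℤ × H → A} (hf : IsPolyMap m f) (t : ℤ) (y : H) :
    f (t, y) = ∑ j ∈ range (m + 1), Ring.choose t j • Δ_[((1 : ℤ), (0 : H))] ^[j] f (0, y) := by
  have h := ((hf.comp_add (0, y)).comp (AddMonoidHom.inl ℤ H)).eq_sum_fwdDiff_iter t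
  simpa [fwdDiff_iter_comp_addMonoidHom, fwdDiff_iter_comp_add] using h

end Int

section Lift

variable {A B : Type*} [AddCommGroup A] [AddCommGroup B]

def PolyMapsLift (π : B →+ A) (H : Type*) [AddCommGroup H] : Prop :=
  ∀ (k : ℕ) (f : H → A), IsPolyMap k f → ∃ g : H → B, IsPolyMap k g ∧ ∀ x, π (g x) = f x

variable {π : B →+ A} {H H' : Type*} [AddCommGroup H] [AddCommGroup H']

theorem polyMapsLift_of_subsingleton [Subsingleton H] (hπ : Surjective π) : PolyMapsLift π H := by
  intro k f _
  obtain ⟨b, hb⟩ := hπ (f 0)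
  exact ⟨fun _ => b, IsPolyMap.const b, fun x => by rw [hb, Subsingleton.elim x 0]⟩

theorem PolyMapsLift.of_addEquiv (h : PolyMapsLift π H) (e : H ≃+ H') : PolyMapsLift π H' := by
  intro k f hf
  obtain ⟨g, hg, hπg⟩ := h k (f ∘ e) (hf.comp e.toAddMonoidHom)
  exact ⟨g ∘ e.symm, hg.comp e.symm.toAddMonoidHom, fun x => by simp [hπg]⟩

theorem PolyMapsLift.int_prod (h : PolyMapsLift π H) : PolyMapsLift π (ℤ × H) := by
  intro m f hf
  have h_coeff (j : ℕ) : IsPolyMap (m - j) ((Δ_[((1 : ℤ), (0 : H))] ^[j] f) ∘ Prod.mk 0) :=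
    (hf.fwdDiff_iter _ j).comp (AddMonoidHom.inr ℤ H)
  choose g hg hπg using fun j => h (m - j) _ (h_coeff j)
  refine ⟨∑ j ∈ range (m + 1), (fun z : ℤ × H => Ring.choose z.1 j) • (g j ∘ Prod.snd), ?_, ?_⟩
  · refine sum_induction _ (IsPolyMap m) (fun _ _ => IsPolyMap.add) IsPolyMap.zero fun j hj => ?_
    have hjm : j + (m - j) = m := Nat.add_sub_cancel' (Nat.lt_succ_iff.1 (mem_range.1 hj))
    exact hjm ▸ ((isPolyMap_choose j).comp (AddMonoidHom.fst ℤ H)).smul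
      ((hg j).comp (AddMonoidHom.snd ℤ H))
  · rintro ⟨t, y⟩
    simp [Finset.sum_apply, hπg, hf.eq_sum_fwdDiff_iter_prod t y]

theorem polyMapsLift_int_pi (hπ : Surjective π) (n : ℕ) : PolyMapsLift π (Fin n → ℤ) := by
  induction n with
  | zero => exact polyMapsLift_of_subsingleton hπ
  | succ n ih => exact ih.int_prod.of_addEquiv (Fin.consLinearEquiv ℤ fun _ => ℤ).toAddEquiv

end Lift

/-- Polynomial maps of degree at most  from  lift along surjective
homomorphisms of abelian groups. -/
theorem stmt_8 {A B : Type*} [AddCommGroup A] [AddCommGroup B]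
    (π : B →+ A) (hπ : Function.Surjective π) (n k : ℕ)
    (f : (Fin n → ℤ) → A) (hf : IsPolyMap k f) :
    ∃ g : (Fin n → ℤ) → B, IsPolyMap k g ∧ ∀ x, π (g x) = f x :=
  polyMapsLift_int_pi hπ n k f hf
end

section
/- Let A be an abelian group and φ : ℤ → ℂ a phase polynomial of degree k with φ^p = 1 for a prime p with k ≤ p−1. Then φ is periodic with period p: φ(m+p) = φ(m) for all m. -/
/-!
A unimodular `φ` is `fun x ↦ ((u x).toMul : ℂ)` for some `u : ℤ → Additive Circle`, and under
this encoding the phase derivative `Δ_t` is minus the forward difference `fwdDiff t`. Taking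
every `tᵢ = 1` in the phase polynomial condition gives `Δ_[1]^[k+1] u = 0`, and `φ ^ p = 1` says
`p • u = 0`. In Newton's expansion `u (y + p) = ∑ C(p, j) • Δ_[1]^[j] u y` the terms with
`0 < j < p` vanish because `p ∣ C(p, j)`, and the term `j = p` vanishes because `p ≥ k + 1`;
only `u y` is left.
-/

/-- Multiplicative derivative: `Δ_t φ (x) = φ x * conj (φ (x+t))`. -/
noncomputable def phaseDeriv {A : Type*} [AddCommGroup A] (φ : A → ℂ) (t : A) : A → ℂ :=
  fun x => φ x * (starRingEnd ℂ) (φ (x + t))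

/-- `φ` is a phase polynomial of degree `k`: it has modulus `1` and any `k+1`
consecutive multiplicative derivatives yield the constant `1`. -/
noncomputable def IsPhasePoly {A : Type*} [AddCommGroup A] (k : ℕ) (φ : A → ℂ) : Prop :=
  (∀ x, ‖φ x‖ = 1) ∧
    ∀ t : Fin (k + 1) → A, ∀ x, ((List.ofFn t).foldl phaseDeriv φ) x = 1

open fwdDiff

theorem List.foldl_replicate_eq_iterate {α β : Type*} (f : α → β → α) (b : β) (n : ℕ) (a : α) :
    (List.replicate n b).foldl f a = (f · b)^[n] a := by
  induction n generalizing a with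
  | zero => rfl
  | succ n ih => rw [List.replicate_succ, List.foldl_cons, ih, Function.iterate_succ_apply]

section ForwardDifference

variable {M G : Type*} [AddCommMonoid M] [AddCommGroup G]

theorem fwdDiff_iter_eq_zero_of_le {h : M} {f : M → G} {m n : ℕ} (hmn : m ≤ n)
    (hf : (Δ_[h])^[m] f = 0) : (Δ_[h])^[n] f = 0 := by
  obtain ⟨d, rfl⟩ := Nat.exists_eq_add_of_le hmn
  rw [add_comm, Function.iterate_add_apply, hf]
  exact Function.iterate_fixed (fwdDiff_const h 0) d

theorem iterate_neg_fwdDiff (h : M) (f : M → G) (n : ℕ) :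
    (fun g => -Δ_[h] g)^[n] f = (-1 : ℤˣ) ^ n • (Δ_[h])^[n] f := by
  induction n with
  | zero => simp
  | succ n ih =>
    rw [Function.iterate_succ_apply', ih, fwdDiff_const_smul,
      ← Function.iterate_succ_apply' (Δ_[h]), pow_succ, mul_comm, mul_smul,
      Units.neg_smul, one_smul]

theorem periodic_of_nsmul_eq_zero_of_fwdDiff_iter_eq_zero {p n : ℕ} (hp : p.Prime) {f : ℤ → G}
    (htors : p • f = 0) (hn : n ≤ p) (hf : (Δ_[1])^[n] f = 0) : Function.Periodic f p := by
  obtain ⟨q, rfl⟩ : ∃ q, p = q + 1 := ⟨p - 1, by have := hp.pos; omega⟩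
  intro y
  have hmiddle : ∀ j ∈ Finset.range q, (q + 1).choose (j + 1) • (Δ_[1])^[j + 1] f y = 0 := by
    intro j hj
    obtain ⟨c, hc⟩ := hp.dvd_choose_self j.succ_ne_zero (by simpa using hj)
    rw [hc, mul_comm, mul_smul, ← Pi.smul_apply (q + 1), ← fwdDiff_iter_const_smul, htors,
      fwdDiff_iter_eq_zero_of_le (Nat.zero_le _) rfl, Pi.zero_apply, smul_zero]
  calc f (y + (q + 1 : ℕ)) = f (y + (q + 1) • 1) := by simp
    _ = ∑ j ∈ Finset.range (q + 1 + 1), (q + 1).choose j • (Δ_[1])^[j] f y :=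
      shift_eq_sum_fwdDiff_iter 1 f (q + 1) y
    _ = f y := by
      rw [Finset.sum_range_succ, Finset.sum_range_succ', Finset.sum_eq_zero hmiddle,
        fwdDiff_iter_eq_zero_of_le hn hf]
      simp

end ForwardDifference

section Circle

variable {A : Type*} [AddCommGroup A]

theorem phaseDeriv_toMul_circle (u : A → Additive Circle) (t : A) :
    phaseDeriv (fun x => ((u x).toMul : ℂ)) t = fun x => (((-Δ_[t] u) x).toMul : ℂ) := by
  funext x
  rw [phaseDeriv, Pi.neg_apply, fwdDiff, neg_sub, toMul_sub, Circle.coe_div, div_eq_mul_inv,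
    ← Circle.coe_inv_eq_conj, Circle.coe_inv]

theorem foldl_phaseDeriv_toMul_circle (u : A → Additive Circle) (ts : List A) :
    ts.foldl phaseDeriv (fun x => ((u x).toMul : ℂ)) =
      fun x => (((ts.foldl (fun g t => -Δ_[t] g) u) x).toMul : ℂ) := by
  induction ts generalizing u with
  | nil => rfl
  | cons t ts ih => rw [List.foldl_cons, List.foldl_cons, phaseDeriv_toMul_circle, ih]

end Circle

/-- A phase polynomial on  of degree  taking values in -th
roots of unity is -periodic. -/
theorem stmt_9 (p : ℕ) (hp : p.Prime) (k : ℕ) (hk : k ≤ p - 1)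
    (φ : ℤ → ℂ) (hφ : IsPhasePoly k φ) (hroot : ∀ m : ℤ, φ m ^ p = 1) :
    ∀ m : ℤ, φ (m + (p : ℤ)) = φ m := by
  obtain ⟨hnorm, hderiv⟩ := hφ
  set u : ℤ → Additive Circle :=
    fun x => Additive.ofMul ⟨φ x, mem_sphere_zero_iff_norm.2 (hnorm x)⟩
  have hφu : φ = fun x => ((u x).toMul : ℂ) := rfl
  have htors : p • u = 0 := by
    funext x
    exact Circle.coe_injective (hroot x)
  have hΔ : (Δ_[1])^[k + 1] u = 0 := by
    have h := hderiv fun _ => 1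
    rw [List.ofFn_const, hφu, foldl_phaseDeriv_toMul_circle, List.foldl_replicate_eq_iterate,
      iterate_neg_fwdDiff] at h
    funext x
    have hx : (((-1 : ℤˣ) ^ (k + 1) • (Δ_[1])^[k + 1] u) x).toMul = 1 := Circle.coe_eq_one.1 (h x)
    rwa [toMul_eq_one, Pi.smul_apply, smul_eq_zero_iff_eq] at hx
  have hperiodic := periodic_of_nsmul_eq_zero_of_fwdDiff_iter_eq_zero hp htors
    (by have := hp.pos; omega) hΔ
  intro m
  rw [hφu]
  exact congrArg _ (hperiodic m)
end

section
/- Let A be a finite abelian group and g : A → ℂ a function with |g| ≤ 1. If g correlates with a projected phase polynomial of degree k — i.e., there is an extension τ : B ↠ A with kernel C and a phase polynomial φ : B → ℂ of degree k such that |⟨g ∘ τ, φ⟩_B| ≥ δ — then ‖g‖_{U^{k+1}(A)} ≥ δ. -/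
/-- The Gowers uniformity norm `‖f‖_{U^{k+1}}` on a finite abelian group. -/
noncomputable def gowersNorm {A : Type*} [AddCommGroup A] [Fintype A] (k : ℕ) (f : A → ℂ) : ℝ :=
  (‖∑ x : A, ∑ t : Fin (k + 1) → A, ∏ ω : Fin (k + 1) → Bool,
      (fun z => (starRingEnd ℂ) z)^[∑ i, if ω i then 1 else 0]
        (f (x + ∑ i, if ω i then t i else 0))‖
    / (Fintype.card A : ℝ) ^ (k + 2)) ^ ((1 : ℝ) / 2 ^ (k + 1))

/-! The Gowers sum of `f` at level `n + 1` is `∑ₛ` of the Gowers sum of the multiplicative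
derivative `Δₛ f` at level `n`. Combined with `|∑ f|² ≤ ∑ₛ |∑ Δₛ f|` and the power-mean
inequality, this gives `|𝔼 f| ≤ ‖f‖_{U^{k+1}}` for every `f`, applied to `f = (g ∘ τ) · conj φ`.
Multiplying by `conj φ` leaves the Gowers norm unchanged, because the factors it contributes to
each cube product multiply to a `(k + 1)`-fold derivative of `φ`, which is `1`. Pulling back along
the surjection `τ` leaves it unchanged too, because all fibres of `τ` have the same size. -/

open Finset

section Cube

variable {B : Type*} [AddCommGroup B]

noncomputable def cubeProd (n : ℕ) (f : B → ℂ) (x : B) (t : Fin n → B) : ℂ :=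
  ∏ ω : Fin n → Bool, (starRingEnd ℂ)^[∑ i, if ω i then 1 else 0]
    (f (x + ∑ i, if ω i then t i else 0))

lemma cubeProd_zero (f : B → ℂ) (x : B) (t : Fin 0 → B) : cubeProd 0 f x t = f x := by
  simp [cubeProd]

lemma cubeProd_succ (n : ℕ) (f : B → ℂ) (x : B) (t : Fin (n + 1) → B) :
    cubeProd (n + 1) f x t = cubeProd n (phaseDeriv f (t 0)) x (Fin.tail t) := by
  unfold cubeProd
  rw [← (Fin.consEquiv fun _ ↦ Bool).prod_comp, Fintype.prod_prod_type, Fintype.prod_bool,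
    ← prod_mul_distrib]
  refine prod_congr rfl fun ω _ ↦ ?_
  simp only [Fin.consEquiv_apply, Fin.sum_univ_succ, Fin.cons_zero, Fin.cons_succ, if_true,
    Bool.false_eq_true, if_false, zero_add, phaseDeriv, iterate_map_mul, Fin.tail]
  rw [add_comm 1, Function.iterate_succ_apply', Function.Commute.iterate_self, add_left_comm,
    mul_comm, add_comm (t 0)]

lemma cubeProd_mul (n : ℕ) (f h : B → ℂ) (x : B) (t : Fin n → B) :
    cubeProd n (fun b ↦ f b * h b) x t = cubeProd n f x t * cubeProd n h x t := by
  simp only [cubeProd, iterate_map_mul, prod_mul_distrib]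

lemma cubeProd_conj (n : ℕ) (f : B → ℂ) (x : B) (t : Fin n → B) :
    cubeProd n (fun b ↦ starRingEnd ℂ (f b)) x t = starRingEnd ℂ (cubeProd n f x t) := by
  simp only [cubeProd, map_prod, ← Function.iterate_succ_apply' (starRingEnd ℂ),
    Function.iterate_succ_apply]

lemma cubeProd_eq_foldl_phaseDeriv (n : ℕ) (f : B → ℂ) (x : B) (t : Fin n → B) :
    cubeProd n f x t = (List.ofFn t).foldl phaseDeriv f x := by
  induction n generalizing f with
  | zero => simp [cubeProd_zero]
  | succ n ih => rw [cubeProd_succ, ih, List.ofFn_succ, List.foldl_cons]; rfl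

end Cube

section GowersSum

variable {B : Type*} [AddCommGroup B] [Fintype B]

noncomputable def gowersSum (n : ℕ) (f : B → ℂ) : ℂ :=
  ∑ x : B, ∑ t : Fin n → B, cubeProd n f x t

lemma gowersNorm_eq_gowersSum (k : ℕ) (f : B → ℂ) :
    gowersNorm k f =
      (‖gowersSum (k + 1) f‖ / (Fintype.card B : ℝ) ^ (k + 2)) ^ ((1 : ℝ) / 2 ^ (k + 1)) :=
  rfl

lemma gowersSum_zero (f : B → ℂ) : gowersSum 0 f = ∑ x, f x := by
  simp [gowersSum, cubeProd_zero]

lemma gowersSum_succ (n : ℕ) (f : B → ℂ) :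
    gowersSum (n + 1) f = ∑ s, gowersSum n (phaseDeriv f s) := by
  simp only [gowersSum, cubeProd_succ]
  refine (sum_congr rfl fun x _ ↦ ?_).trans sum_comm
  rw [← (Fin.consEquiv fun _ ↦ B).sum_comp, Fintype.sum_prod_type]
  rfl

lemma gowersSum_one (f : B → ℂ) : gowersSum 1 f = (‖∑ x, f x‖ ^ 2 : ℝ) := by
  simp only [gowersSum_succ, gowersSum_zero, phaseDeriv]
  rw [sum_comm]
  have shift : ∀ x, ∑ s, f (x + s) = ∑ y, f y :=
    fun x ↦ Fintype.sum_equiv (Equiv.addLeft x) _ _ fun _ ↦ rfl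
  simp_rw [← mul_sum, ← map_sum, shift, ← sum_mul, Complex.mul_conj, Complex.normSq_eq_norm_sq]

open ComplexOrder in
lemma gowersSum_succ_nonneg (n : ℕ) (f : B → ℂ) : 0 ≤ gowersSum (n + 1) f := by
  induction n generalizing f with
  | zero => rw [gowersSum_one]; exact Complex.zero_le_real.2 (by positivity)
  | succ n ih => rw [gowersSum_succ]; exact sum_nonneg fun s _ ↦ ih _

open ComplexOrder in
lemma norm_gowersSum_succ_succ (n : ℕ) (f : B → ℂ) :
    ‖gowersSum (n + 2) f‖ = ∑ s, ‖gowersSum (n + 1) (phaseDeriv f s)‖ := by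
  rw [gowersSum_succ, sum_congr rfl fun s _ ↦ Complex.eq_coe_norm_of_nonneg
    (gowersSum_succ_nonneg n (phaseDeriv f s)), ← Complex.ofReal_sum, Complex.norm_real,
    Real.norm_of_nonneg (sum_nonneg fun _ _ ↦ norm_nonneg _)]

lemma sq_norm_sum_le_sum_norm_sum_phaseDeriv (f : B → ℂ) :
    ‖∑ x, f x‖ ^ 2 ≤ ∑ s, ‖∑ x, phaseDeriv f s x‖ := by
  calc ‖∑ x, f x‖ ^ 2 = ‖gowersSum 1 f‖ := by
        rw [gowersSum_one, Complex.norm_real, Real.norm_of_nonneg (by positivity)]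
    _ ≤ ∑ s, ‖∑ x, phaseDeriv f s x‖ := by
        simpa only [gowersSum_succ, gowersSum_zero] using norm_sum_le _ _

end GowersSum

lemma pow_sum_mul_card_le_card_pow_mul_sum_pow {ι : Type*} [Fintype ι] (a : ι → ℝ)
    (ha : ∀ i, 0 ≤ a i) {m : ℕ} (hm : m ≠ 0) :
    (∑ i, a i) ^ m * Fintype.card ι ≤ (Fintype.card ι : ℝ) ^ m * ∑ i, a i ^ m := by
  obtain ⟨m, rfl⟩ := Nat.exists_eq_succ_of_ne_zero hm
  have hjensen := pow_sum_le_card_mul_sum_pow (s := univ) (fun i _ ↦ ha i) m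
  rw [card_univ] at hjensen
  calc (∑ i, a i) ^ (m + 1) * Fintype.card ι
      ≤ (Fintype.card ι : ℝ) ^ m * (∑ i, a i ^ (m + 1)) * Fintype.card ι := by gcongr
    _ = (Fintype.card ι : ℝ) ^ (m + 1) * ∑ i, a i ^ (m + 1) := by ring

section GowersCauchySchwarz

variable {B : Type*} [AddCommGroup B] [Fintype B]

lemma norm_sum_pow_mul_card_pow_le_gowersSum (n : ℕ) (f : B → ℂ) :
    ‖∑ x, f x‖ ^ 2 ^ (n + 1) * (Fintype.card B : ℝ) ^ (n + 2) ≤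
      (Fintype.card B : ℝ) ^ 2 ^ (n + 1) * ‖gowersSum (n + 1) f‖ := by
  induction n generalizing f with
  | zero =>
    rw [gowersSum_one, Complex.norm_real, Real.norm_of_nonneg (by positivity)]
    exact le_of_eq (by ring)
  | succ n ih =>
    set N : ℝ := (Fintype.card B : ℝ)
    set M := 2 ^ (n + 1)
    set a := fun s ↦ ‖∑ x, phaseDeriv f s x‖
    calc ‖∑ x, f x‖ ^ 2 ^ (n + 2) * N ^ (n + 3)
        = (‖∑ x, f x‖ ^ 2) ^ M * N * N ^ (n + 2) := by ring
      _ ≤ (∑ s, a s) ^ M * N * N ^ (n + 2) := by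
        gcongr; exact sq_norm_sum_le_sum_norm_sum_phaseDeriv f
      _ ≤ N ^ M * (∑ s, a s ^ M) * N ^ (n + 2) := by
        refine mul_le_mul_of_nonneg_right ?_ (by positivity)
        exact pow_sum_mul_card_le_card_pow_mul_sum_pow a (fun _ ↦ norm_nonneg _)
          (pow_ne_zero _ two_ne_zero)
      _ = N ^ M * ∑ s, a s ^ M * N ^ (n + 2) := by rw [mul_assoc, sum_mul]
      _ ≤ N ^ M * ∑ s, N ^ M * ‖gowersSum (n + 1) (phaseDeriv f s)‖ :=
        mul_le_mul_of_nonneg_left (sum_le_sum fun s _ ↦ ih _) (by positivity)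
      _ = N ^ 2 ^ (n + 2) * ‖gowersSum (n + 2) f‖ := by
        rw [norm_gowersSum_succ_succ, ← mul_sum]; ring

lemma norm_expect_le_gowersNorm (k : ℕ) (f : B → ℂ) :
    ‖(Fintype.card B : ℂ)⁻¹ * ∑ x, f x‖ ≤ gowersNorm k f := by
  have hM : (0 : ℝ) < 2 ^ (k + 1) := by positivity
  rw [gowersNorm_eq_gowersSum, one_div, Real.le_rpow_inv_iff_of_pos (by positivity)
    (by positivity) hM, norm_mul, norm_inv, Complex.norm_natCast, le_div_iff₀ (by positivity),
    show (2 : ℝ) ^ (k + 1) = ((2 ^ (k + 1) : ℕ) : ℝ) by push_cast; rfl, Real.rpow_natCast,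
    inv_mul_eq_div, div_pow, div_mul_eq_mul_div, div_le_iff₀ (by positivity)]
  exact (norm_sum_pow_mul_card_pow_le_gowersSum k f).trans_eq (mul_comm _ _)

end GowersCauchySchwarz

section Invariance

variable {A B : Type*} [AddCommGroup A] [Fintype A] [AddCommGroup B] [Fintype B]

lemma gowersNorm_mul_conj_of_foldl_phaseDeriv_eq_one {k : ℕ} {φ : B → ℂ}
    (hφ : ∀ t : Fin (k + 1) → B, ∀ x, (List.ofFn t).foldl phaseDeriv φ x = 1) (f : B → ℂ) :
    gowersNorm k (fun b ↦ f b * starRingEnd ℂ (φ b)) = gowersNorm k f := by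
  have hcube : ∀ x t, cubeProd (k + 1) φ x t = 1 := fun x t ↦
    (cubeProd_eq_foldl_phaseDeriv _ φ x t).trans (hφ t x)
  simp only [gowersNorm_eq_gowersSum, gowersSum, cubeProd_mul, cubeProd_conj, hcube, map_one,
    mul_one]

lemma AddMonoidHom.card_mul_sum_comp_of_surjective {𝕜 : Type*} [CommSemiring 𝕜] (σ : B →+ A)
    (hσ : Function.Surjective σ) (F : A → 𝕜) :
    (Fintype.card A : 𝕜) * ∑ b, F (σ b) = Fintype.card B * ∑ a, F a := by
  classical
  have hfiber : ∀ a, #{b | σ b = a} = #{b | σ b = 0} := fun a ↦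
    AddMonoidHom.card_fiber_eq_of_mem_range σ (hσ a) ⟨0, map_zero σ⟩
  have hsum : ∀ G : A → 𝕜, ∑ b, G (σ b) = #{b | σ b = 0} * ∑ a, G a := fun G ↦ by
    rw [← sum_fiberwise_of_maps_to (g := σ) (fun _ _ ↦ mem_univ _), mul_sum]
    refine sum_congr rfl fun a _ ↦ ?_
    rw [sum_congr rfl fun b hb ↦ by rw [(mem_filter.1 hb).2], sum_const, hfiber, nsmul_eq_mul]
  have hcard := hsum fun _ ↦ 1
  simp only [sum_const, card_univ, nsmul_eq_mul, mul_one] at hcard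
  rw [hsum, hcard]; ring

lemma gowersSum_comp_of_surjective (τ : B →+ A) (hτ : Function.Surjective τ) (n : ℕ)
    (g : A → ℂ) :
    (Fintype.card A : ℂ) ^ (n + 1) * gowersSum n (fun b ↦ g (τ b)) =
      (Fintype.card B : ℂ) ^ (n + 1) * gowersSum n g := by
  let τn : (Fin n → B) →+ (Fin n → A) := AddMonoidHom.compLeft τ (Fin n)
  have hτn : Function.Surjective τn := hτ.comp_left
  have hcube : ∀ x t, cubeProd n (fun b ↦ g (τ b)) x t = cubeProd n g (τ x) (τn t) := by
    intro x t
    simp only [cubeProd, map_add, map_sum, apply_ite τ, map_zero]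
    rfl
  have hinner : ∀ a, (Fintype.card A : ℂ) ^ n * ∑ t, cubeProd n g a (τn t) =
      (Fintype.card B : ℂ) ^ n * ∑ t, cubeProd n g a t := fun a ↦ by
    simpa only [Fintype.card_fun, Fintype.card_fin, Nat.cast_pow] using
      τn.card_mul_sum_comp_of_surjective hτn (cubeProd n g a)
  calc (Fintype.card A : ℂ) ^ (n + 1) * gowersSum n (fun b ↦ g (τ b))
      = Fintype.card A * ∑ x, (Fintype.card A : ℂ) ^ n * ∑ t, cubeProd n g (τ x) (τn t) := by
        simp only [gowersSum, hcube, pow_succ', mul_assoc, mul_sum]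
    _ = Fintype.card A * ∑ x, (Fintype.card B : ℂ) ^ n * ∑ t, cubeProd n g (τ x) t := by
        simp only [hinner]
    _ = Fintype.card B * ∑ a, (Fintype.card B : ℂ) ^ n * ∑ t, cubeProd n g a t :=
        τ.card_mul_sum_comp_of_surjective hτ
          fun a ↦ (Fintype.card B : ℂ) ^ n * ∑ t, cubeProd n g a t
    _ = (Fintype.card B : ℂ) ^ (n + 1) * gowersSum n g := by
        rw [gowersSum, ← mul_sum, pow_succ', mul_assoc]

lemma gowersNorm_comp_of_surjective (τ : B →+ A) (hτ : Function.Surjective τ) (k : ℕ)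
    (g : A → ℂ) : gowersNorm k (fun b ↦ g (τ b)) = gowersNorm k g := by
  have h := congrArg norm (gowersSum_comp_of_surjective τ hτ (k + 1) g)
  simp only [norm_mul, norm_pow, Complex.norm_natCast] at h
  rw [gowersNorm_eq_gowersSum, gowersNorm_eq_gowersSum]
  congr 1
  rw [div_eq_div_iff (by positivity) (by positivity)]
  linear_combination h

end Invariance

theorem stmt_10_general {A B : Type*} [AddCommGroup A] [Fintype A] [AddCommGroup B] [Fintype B]
    (τ : B →+ A) (hτ : Function.Surjective τ) (k : ℕ) (g : A → ℂ)
    (φ : B → ℂ) (hφ : IsPhasePoly k φ) (δ : ℝ)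
    (hcorr : δ ≤ ‖(Fintype.card B : ℂ)⁻¹ * ∑ b : B, g (τ b) * (starRingEnd ℂ) (φ b)‖) :
    δ ≤ gowersNorm k g :=
  calc δ ≤ ‖(Fintype.card B : ℂ)⁻¹ * ∑ b : B, g (τ b) * (starRingEnd ℂ) (φ b)‖ := hcorr
    _ ≤ gowersNorm k (fun b ↦ g (τ b) * starRingEnd ℂ (φ b)) := norm_expect_le_gowersNorm k _
    _ = gowersNorm k (fun b ↦ g (τ b)) :=
      gowersNorm_mul_conj_of_foldl_phaseDeriv_eq_one hφ.2 _
    _ = gowersNorm k g := gowersNorm_comp_of_surjective τ hτ k g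

/-- Correlation with a projected phase polynomial of degree  forces a large
 norm. -/
theorem stmt_10 {A B : Type*} [AddCommGroup A] [Fintype A] [AddCommGroup B] [Fintype B]
    (τ : B →+ A) (hτ : Function.Surjective τ) (k : ℕ) (g : A → ℂ)
    (hg : ∀ a, ‖g a‖ ≤ 1) (φ : B → ℂ) (hφ : IsPhasePoly k φ) (δ : ℝ)
    (hcorr : δ ≤ ‖(Fintype.card B : ℂ)⁻¹ * ∑ b : B, g (τ b) * (starRingEnd ℂ) (φ b)‖) :
    δ ≤ gowersNorm k g :=
  stmt_10_general τ hτ k g φ hφ δ hcorr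
end

section
/- Let A, B be abelian groups and let φ : A → B be a function that is a morphism from the degree-i structure 𝒟_i(A) to the degree-j structure 𝒟_j(B), with i > j ≥ 0 and i,j ≥ 0. Then φ is constant. Concretely: if for every n and every map c : {0,1}ⁿ → A in Cⁿ(𝒟_i(A)), the composition φ∘c lies in Cⁿ(𝒟_j(B)), then φ is constant. -/
/-- A cube morphism `{0,1}^m → {0,1}^n`: a map which extends to an affine
homomorphism `ℤ^m → ℤ^n`. -/
def IsCubeMorphism {m n : ℕ} (ψ : (Fin m → Bool) → (Fin n → Bool)) : Prop :=
  ∃ (L : (Fin m → ℤ) →ₗ[ℤ] (Fin n → ℤ)) (b : Fin n → ℤ),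
    ∀ v : Fin m → Bool,
      (fun i => (if ψ v i then 1 else 0 : ℤ)) =
        L (fun i => (if v i then 1 else 0 : ℤ)) + b

/-- `c : {0,1}^n → A` is a cube of the degree-`d` structure `𝒟_d(A)`:
for every cube morphism `ψ : {0,1}^{d+1} → {0,1}^n` the alternating sum of
`c ∘ ψ` vanishes. -/
def IsDegCube {A : Type*} [AddCommGroup A] (d n : ℕ) (c : (Fin n → Bool) → A) : Prop :=
  ∀ ψ : (Fin (d + 1) → Bool) → (Fin n → Bool), IsCubeMorphism ψ →
    ∑ v : Fin (d + 1) → Bool, ((-1 : ℤ) ^ (∑ i, if v i then 1 else 0)) • c (ψ v) = 0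

/-!
Every map `c : {0,1}^{j+1} → A` is a cube of `𝒟_i(A)` once `i > j`. Indeed, a cube morphism
`{0,1}^{i+1} → {0,1}^{j+1}` is affine with `0/1` values, so each output coordinate depends on at
most one input coordinate; with more inputs than outputs some input coordinate is ignored, and the
alternating sum over the morphism cancels in pairs. Taking `c` equal to `a` at the top vertex and to
`b` elsewhere, the alternating sum of `φ ∘ c` over the identity morphism, which vanishes in `𝒟_j(B)`,
is `±(φ a - φ b)`.
-/

open Finset Function

section AlternatingSum

variable {ι : Type*} [Fintype ι] [DecidableEq ι] {A : Type*} [AddCommGroup A]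

lemma neg_one_pow_update_not (v : ι → Bool) (k : ι) :
    (-1 : ℤ) ^ (∑ i, if update v k (!v k) i then 1 else 0)
      = -(-1 : ℤ) ^ (∑ i, if v i then 1 else 0) := by
  have hsplit (w : ι → Bool) : (∑ i, if w i then (1 : ℕ) else 0)
      = (if w k then 1 else 0) + ∑ i ∈ univ.erase k, if w i then 1 else 0 :=
    (add_sum_erase _ _ (mem_univ k)).symm
  have herase : (∑ i ∈ univ.erase k, if update v k (!v k) i then (1 : ℕ) else 0)
      = ∑ i ∈ univ.erase k, if v i then 1 else 0 :=
    sum_congr rfl fun i hi => by rw [update_of_ne (ne_of_mem_erase hi)]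
  rw [hsplit, hsplit v, herase, update_self]
  cases v k <;> simp [pow_add]

/-- Flipping coordinate `k` pairs the vertices of the cube with opposite signs. -/
lemma sum_neg_one_pow_smul_eq_zero_of_update_eq (f : (ι → Bool) → A) (k : ι)
    (hf : ∀ v x, f (update v k x) = f v) :
    ∑ v : ι → Bool, ((-1 : ℤ) ^ (∑ i, if v i then 1 else 0)) • f v = 0 := by
  refine sum_ninvolution (fun v => update v k (!v k)) (fun v => ?_) (fun v _ h => ?_)
    (fun _ => mem_univ _) (fun v => by simp)
  · rw [hf, neg_one_pow_update_not, neg_smul, add_neg_cancel]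
  · simpa using congrFun h k

lemma sum_neg_one_pow_smul_update_const [Nonempty ι] (u : ι → Bool) (α β : A) :
    ∑ v : ι → Bool, ((-1 : ℤ) ^ (∑ i, if v i then 1 else 0)) • update (fun _ => β) u α v
      = ((-1 : ℤ) ^ (∑ i, if u i then 1 else 0)) • (α - β) := by
  have hsplit (v : ι → Bool) :
      update (fun _ => β) u α v = β + (Pi.single u (α - β) : (ι → Bool) → A) v := by
    by_cases hv : v = u <;> simp [hv]
  have hconst : ∑ v : ι → Bool, ((-1 : ℤ) ^ (∑ i, if v i then 1 else 0)) • β = 0 :=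
    sum_neg_one_pow_smul_eq_zero_of_update_eq _ (Classical.arbitrary ι) fun _ _ => rfl
  simp only [hsplit, smul_add, sum_add_distrib, hconst, zero_add]
  rw [Fintype.sum_eq_single u fun v hv => by simp [hv], Pi.single_eq_same]

end AlternatingSum

section CubeMorphism

variable {m n : ℕ} {ψ : (Fin m → Bool) → (Fin n → Bool)}

lemma IsCubeMorphism.exists_affine (hψ : IsCubeMorphism ψ) :
    ∃ (w : Fin n → Fin m → ℤ) (β : Fin n → ℤ), ∀ v l,
      (if ψ v l then 1 else 0 : ℤ) = ∑ k, (if v k then w l k else 0) + β l := by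
  obtain ⟨L, β, hL⟩ := hψ
  refine ⟨fun l k => L (Pi.single k 1) l, β, fun v l => ?_⟩
  rw [congrFun (hL v) l, Pi.add_apply, L.pi_apply_eq_sum_univ]
  congr 1
  simp only [Finset.sum_apply, Pi.smul_apply, smul_eq_mul, ite_mul, one_mul, zero_mul]
  congr! 3
  ext j
  simp [Pi.single_apply, eq_comm]

lemma eq_zero_or_eq_zero_of_forall_sum_add_mem_Icc {ι : Type*} [DecidableEq ι]
    (w : ι → ℤ) (β : ℤ) (h : ∀ S : Finset ι, ∑ k ∈ S, w k + β ∈ Set.Icc 0 1)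
    {k k' : ι} (hkk' : k ≠ k') :
    w k = 0 ∨ w k' = 0 := by
  have h₀ := h ∅
  have h₁ := h {k}
  have h₂ := h {k'}
  have h₃ := h {k, k'}
  simp only [sum_empty, sum_singleton, sum_pair hkk', Set.mem_Icc] at h₀ h₁ h₂ h₃
  omega

lemma IsCubeMorphism.exists_forall_update_eq (hψ : IsCubeMorphism ψ) (hnm : n < m) :
    ∃ k, ∀ v x, ψ (update v k x) = ψ v := by
  obtain ⟨w, β, hwβ⟩ := hψ.exists_affine
  have hrow (l : Fin n) {k k' : Fin m} (hkk' : k ≠ k') : w l k = 0 ∨ w l k' = 0 := by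
    refine eq_zero_or_eq_zero_of_forall_sum_add_mem_Icc (w l) (β l) (fun S => ?_) hkk'
    have := hwβ (fun p => decide (p ∈ S)) l
    simp only [decide_eq_true_eq, ← sum_filter, filter_mem_eq_inter, univ_inter] at this
    rw [← this]
    split_ifs <;> simp
  obtain ⟨k, hk⟩ : ∃ k, ∀ l, w l k = 0 := by
    by_contra! hcol
    choose r hr using hcol
    have hinj : Injective r := fun k k' hkk' => by
      by_contra hne
      exact (hrow (r k) hne).elim (hr k) (hkk' ▸ hr k')
    have := Fintype.card_le_of_injective r hinj
    simp only [Fintype.card_fin] at this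
    omega
  refine ⟨k, fun v x => funext fun l => ?_⟩
  have hsum : (∑ p, if update v k x p then w l p else 0) = ∑ p, if v p then w l p else 0 := by
    refine sum_congr rfl fun p _ => ?_
    by_cases hp : p = k
    · subst hp; simp [hk]
    · rw [update_of_ne hp]
  have := hwβ (update v k x) l
  rw [hsum, ← hwβ v l] at this
  revert this
  cases ψ (update v k x) l <;> cases ψ v l <;> simp

lemma isCubeMorphism_id : IsCubeMorphism (id : (Fin n → Bool) → (Fin n → Bool)) :=
  ⟨LinearMap.id, 0, fun _ => by simp⟩

end CubeMorphism

section DegCube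

variable {A : Type*} [AddCommGroup A] {d n : ℕ}

theorem isDegCube_of_le (h : n ≤ d) (c : (Fin n → Bool) → A) : IsDegCube d n c := by
  intro ψ hψ
  obtain ⟨k, hk⟩ := hψ.exists_forall_update_eq (Nat.lt_succ_of_le h)
  exact sum_neg_one_pow_smul_eq_zero_of_update_eq (c ∘ ψ) k fun v x => by simp [hk]

lemma IsDegCube.sum_neg_one_pow_smul_eq_zero {c : (Fin (d + 1) → Bool) → A}
    (hc : IsDegCube d (d + 1) c) :
    ∑ v : Fin (d + 1) → Bool, ((-1 : ℤ) ^ (∑ i, if v i then 1 else 0)) • c v = 0 :=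
  hc id isCubeMorphism_id

end DegCube

/-- A morphism from the degree-`i` structure `𝒟_i(A)` to the degree-`j`
structure `𝒟_j(B)` with `i > j` is constant. -/
theorem stmt_13 {A B : Type*} [AddCommGroup A] [AddCommGroup B] (i j : ℕ)
    (hij : i > j) (φ : A → B)
    (hφ : ∀ n : ℕ, ∀ c : (Fin n → Bool) → A, IsDegCube i n c → IsDegCube j n (φ ∘ c)) :
    ∀ a b : A, φ a = φ b := by
  intro a b
  let top : Fin (j + 1) → Bool := fun _ => true
  let c := update (fun _ => b) top a
  have hsum := (hφ _ c (isDegCube_of_le hij c)).sum_neg_one_pow_smul_eq_zero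
  have hφc : φ ∘ c = update (fun _ => φ b) top (φ a) := comp_update φ _ top a
  rw [hφc, sum_neg_one_pow_smul_update_const] at hsum
  exact sub_eq_zero.mp (((isUnit_neg_one (α := ℤ)).pow _).smul_eq_zero.mp hsum)
end

section
/- Let p be prime, k ≤ p−1, and φ : (ℤ/pℤ)ⁿ → ℂ a phase polynomial of degree k with φ^p = 1. Then there is a polynomial P ∈ (ℤ/pℤ)[X₁,…,Xₙ] of total degree ≤ k such that φ(x) = e^{2πi·P(x)/p} for all x, where P(x) ∈ ℤ/pℤ is evaluated and lifted to {0,…,p−1}. -/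
open MvPolynomial Function fwdDiff

section IteratedFwdDiff

variable {M G : Type*} [AddCommMonoid M] [AddCommGroup G]

def iteratedFwdDiff (L : List M) (f : M → G) : M → G :=
  L.foldl (fun g h => Δ_[h] g) f

@[simp]
lemma iteratedFwdDiff_nil (f : M → G) : iteratedFwdDiff [] f = f := rfl

@[simp]
lemma iteratedFwdDiff_cons (h : M) (L : List M) (f : M → G) :
    iteratedFwdDiff (h :: L) f = iteratedFwdDiff L (Δ_[h] f) := rfl

lemma iteratedFwdDiff_append (L₁ L₂ : List M) (f : M → G) :
    iteratedFwdDiff (L₁ ++ L₂) f = iteratedFwdDiff L₂ (iteratedFwdDiff L₁ f) :=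
  List.foldl_append ..

lemma iteratedFwdDiff_zero (L : List M) : iteratedFwdDiff L (0 : M → G) = 0 := by
  induction L with
  | nil => rfl
  | cons h L ih =>
    rw [iteratedFwdDiff_cons, show Δ_[h] (0 : M → G) = 0 from funext fun _ => sub_self 0, ih]

lemma iteratedFwdDiff_neg (L : List M) (f : M → G) :
    iteratedFwdDiff L (-f) = -iteratedFwdDiff L f := by
  induction L generalizing f with
  | nil => rfl
  | cons h L ih =>
    have : Δ_[h] (-f) = -Δ_[h] f := funext fun _ => (neg_sub' ..).symm
    rw [iteratedFwdDiff_cons, this, ih, iteratedFwdDiff_cons]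

lemma iteratedFwdDiff_const_smul {R : Type*} [Monoid R] [DistribMulAction R G] (L : List M)
    (r : R) (f : M → G) : iteratedFwdDiff L (r • f) = r • iteratedFwdDiff L f := by
  induction L generalizing f with
  | nil => rfl
  | cons h L ih => simp [ih]

lemma iteratedFwdDiff_finsetSum {α : Type*} (L : List M) (s : Finset α) (f : α → M → G) :
    iteratedFwdDiff L (∑ a ∈ s, f a) = ∑ a ∈ s, iteratedFwdDiff L (f a) := by
  induction L generalizing f with
  | nil => rfl
  | cons h L ih => simp [ih]

lemma iteratedFwdDiff_eq_zero_of_length_le {f : M → G} {k : ℕ}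
    (hf : ∀ L : List M, L.length = k → iteratedFwdDiff L f = 0) {L : List M}
    (hL : k ≤ L.length) : iteratedFwdDiff L f = 0 := by
  rw [← L.take_append_drop k, iteratedFwdDiff_append, hf _ (by simpa using hL),
    iteratedFwdDiff_zero]

end IteratedFwdDiff

section CoordShifts

variable {ι R S : Type*} [DecidableEq ι] [AddCommMonoid R] [CommRing S]

noncomputable def coordShifts (a : ι →₀ ℕ) (h : R) : List (ι → R) :=
  a.toMultiset.toList.map (Pi.single · h)

lemma length_coordShifts (a : ι →₀ ℕ) (h : R) :
    (coordShifts a h).length = Multiset.card a.toMultiset := by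
  simp [coordShifts]

variable [Fintype ι]

lemma fwdDiff_single_prod (u : ι → R → S) (j : ι) (h : R) :
    Δ_[Pi.single j h] (fun x => ∏ i, u i (x i)) =
      fun x => ∏ i, update u j (Δ_[h] (u j)) i (x i) := by
  funext x
  have hshift :
      ∏ i ∈ {j}ᶜ, u i ((x + Pi.single j h : ι → R) i) = ∏ i ∈ {j}ᶜ, u i (x i) :=
    Finset.prod_congr rfl fun i hi => by
      simp [Pi.single_eq_of_ne (Finset.mem_compl.mp hi ∘ Finset.mem_singleton.mpr)]
  have hupd : ∏ i ∈ {j}ᶜ, update u j (Δ_[h] (u j)) i (x i) = ∏ i ∈ {j}ᶜ, u i (x i) :=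
    Finset.prod_congr rfl fun i hi => by
      rw [update_of_ne (Finset.mem_compl.mp hi ∘ Finset.mem_singleton.mpr)]
  simp only [fwdDiff]
  rw [Fintype.prod_eq_mul_prod_compl j, Fintype.prod_eq_mul_prod_compl j,
    Fintype.prod_eq_mul_prod_compl j, hshift, hupd, update_self]
  simp only [fwdDiff, Pi.add_apply, Pi.single_eq_same, sub_mul]

lemma iteratedFwdDiff_map_single_prod_iterate (u : ι → R → S) (h : R) (js : List ι)
    (c : ι → ℕ) :
    iteratedFwdDiff (js.map (Pi.single · h)) (fun x => ∏ i, ((Δ_[h])^[c i] (u i)) (x i)) =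
      fun x => ∏ i, ((Δ_[h])^[c i + js.count i] (u i)) (x i) := by
  induction js generalizing c with
  | nil => rfl
  | cons j js ih =>
    have hupd : update (fun i => (Δ_[h])^[c i] (u i)) j (Δ_[h] ((Δ_[h])^[c j] (u j))) =
        fun i => (Δ_[h])^[update c j (c j + 1) i] (u i) := by
      funext i
      by_cases hij : i = j
      · subst hij; simp [iterate_succ_apply']
      · simp [hij]
    rw [List.map_cons, iteratedFwdDiff_cons, fwdDiff_single_prod, hupd, ih]
    funext x
    refine Finset.prod_congr rfl fun i _ => ?_
    by_cases hij : i = j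
    · subst hij
      simp [add_right_comm, add_assoc]
    · simp [hij, Ne.symm hij]

lemma iteratedFwdDiff_coordShifts_prod (u : ι → R → S) (a : ι →₀ ℕ) (h : R) :
    iteratedFwdDiff (coordShifts a h) (fun x => ∏ i, u i (x i)) =
      fun x => ∏ i, ((Δ_[h])^[a i] (u i)) (x i) := by
  simpa [coordShifts, ← Multiset.coe_count, Finsupp.count_toMultiset] using
    iteratedFwdDiff_map_single_prod_iterate u h a.toMultiset.toList 0

end CoordShifts

section PhaseDeriv

variable {A B : Type*} [AddCommGroup A] [AddCommGroup B] [Finite B]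

lemma phaseDeriv_addChar_comp (ψ : AddChar B ℂ) (g : A → B) (t : A) :
    phaseDeriv (ψ ∘ g) t = ψ ∘ (-Δ_[t] g) := by
  funext x
  simp only [phaseDeriv, comp_apply, Pi.neg_apply, fwdDiff, neg_sub, ← AddChar.map_neg_eq_conj,
    ← AddChar.map_add_eq_mul, ← sub_eq_add_neg]

lemma foldl_phaseDeriv_addChar_comp (ψ : AddChar B ℂ) (L : List A) (g : A → B) :
    L.foldl phaseDeriv (ψ ∘ g) = ψ ∘ ((-1 : ℤ) ^ L.length • iteratedFwdDiff L g) := by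
  induction L generalizing g with
  | nil => simp
  | cons t L ih =>
    rw [List.foldl_cons, phaseDeriv_addChar_comp, ih, iteratedFwdDiff_neg, List.length_cons,
      pow_succ, mul_neg_one, neg_smul, smul_neg, iteratedFwdDiff_cons]

lemma iteratedFwdDiff_eq_zero_of_isPhasePoly {ψ : AddChar B ℂ} (hψ : Injective ψ) {g : A → B}
    {k : ℕ} (hg : IsPhasePoly k (ψ ∘ g)) (L : List A) (hL : L.length = k + 1) :
    iteratedFwdDiff L g = 0 := by
  have hofFn : List.ofFn (fun i => L.get (Fin.cast hL.symm i)) = L := by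
    rw [← List.ofFn_congr hL, List.ofFn_get]
  funext x
  have hx := hg.2 (fun i => L.get (Fin.cast hL.symm i)) x
  rw [hofFn, foldl_phaseDeriv_addChar_comp, comp_apply, ← ψ.map_zero_eq_one, hψ.eq_iff] at hx
  rcases neg_one_pow_eq_or ℤ L.length with h | h <;> simpa [h] using hx

end PhaseDeriv

lemma ZMod.exists_stdAddChar_eq {N : ℕ} [NeZero N] {z : ℂ} (hz : z ^ N = 1) :
    ∃ a : ZMod N, ZMod.stdAddChar a = z := by
  obtain ⟨i, -, rfl⟩ := (Complex.isPrimitiveRoot_exp N (NeZero.ne N)).eq_pow_of_pow_eq_one hz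
  refine ⟨i, ?_⟩
  rw [← Int.cast_natCast, ZMod.stdAddChar_coe, ← Complex.exp_nat_mul]
  congr 1
  push_cast
  ring

section Polynomial

variable {ι R : Type*} [Fintype ι] [DecidableEq ι] [CommRing R]

lemma iteratedFwdDiff_coordShifts_eval_apply_zero (P : MvPolynomial ι R) (a : ι →₀ ℕ) :
    iteratedFwdDiff (coordShifts a 1) (fun x => eval x P) 0 =
      ∑ b ∈ P.support, coeff b P * ∏ i, ((Δ_[1])^[a i] (· ^ b i)) 0 := by
  have hP : (fun x => eval x P) =
      ∑ b ∈ P.support, coeff b P • fun x => ∏ i, (· ^ b i) (x i) := by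
    funext x
    simp [eval_eq']
  rw [hP, iteratedFwdDiff_finsetSum, Finset.sum_apply]
  refine Finset.sum_congr rfl fun b _ => ?_
  rw [iteratedFwdDiff_const_smul, Pi.smul_apply, smul_eq_mul]
  exact congrArg (coeff b P * ·)
    (congrFun (iteratedFwdDiff_coordShifts_prod (fun i (r : R) => r ^ b i) a 1) 0)

lemma iteratedFwdDiff_coordShifts_eval_apply_zero_of_maximal (P : MvPolynomial ι R)
    {a : ι →₀ ℕ} (ha : a ∈ P.support)
    (hmax : ∀ b ∈ P.support, Multiset.card b.toMultiset ≤ Multiset.card a.toMultiset) :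
    iteratedFwdDiff (coordShifts a 1) (fun x => eval x P) 0 =
      coeff a P * ∏ i, ((a i).factorial : R) := by
  rw [iteratedFwdDiff_coordShifts_eval_apply_zero, Finset.sum_eq_single_of_mem a ha]
  · simp [fwdDiff_iter_eq_factorial]
  intro b hb hba
  obtain ⟨i, hi⟩ : ∃ i, b i < a i := by
    by_contra! hab
    have hlt : a < b := lt_of_le_of_ne (Finsupp.le_def.mpr hab) (Ne.symm hba)
    exact (hmax b hb).not_gt (Multiset.card_lt_card (Finsupp.toMultiset_strictMono hlt))
  rw [Finset.prod_eq_zero (Finset.mem_univ i) (by rw [fwdDiff_iter_pow_eq_zero_of_lt hi]; rfl),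
    mul_zero]

theorem MvPolynomial.totalDegree_le_of_iteratedFwdDiff_eval_eq_zero {p : ℕ} [Fact p.Prime]
    {k : ℕ} (P : MvPolynomial ι (ZMod p)) (hP : P ∈ restrictDegree ι (ZMod p) (p - 1))
    (hvan : ∀ L : List (ι → ZMod p), L.length = k + 1 →
      iteratedFwdDiff L (fun x => eval x P) = 0) :
    P.totalDegree ≤ k := by
  by_contra! hk
  have hne : P.support.Nonempty :=
    Finset.nonempty_iff_ne_empty.mpr fun h => by simp [totalDegree, h] at hk
  obtain ⟨a, ha, hdeg⟩ :=
    Finset.exists_mem_eq_sup P.support hne (fun m => Multiset.card m.toMultiset)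
  rw [← totalDegree_eq] at hdeg
  have hmax : ∀ b ∈ P.support, Multiset.card b.toMultiset ≤ Multiset.card a.toMultiset :=
    fun b hb => hdeg ▸ totalDegree_eq P ▸
      Finset.le_sup (f := fun m => Multiset.card m.toMultiset) hb
  have hzero := congrFun (iteratedFwdDiff_eq_zero_of_length_le hvan
    (L := coordShifts a 1) (by rw [length_coordShifts]; omega)) 0
  rw [iteratedFwdDiff_coordShifts_eval_apply_zero_of_maximal P ha hmax] at hzero
  have hfact : ∏ i, ((a i).factorial : ZMod p) ≠ 0 := by
    refine Finset.prod_ne_zero_iff.mpr fun i _ => ?_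
    have hai := (mem_restrictDegree _ _ _).mp hP a ha i
    have hp := (Fact.out : p.Prime).two_le
    rw [Ne, ZMod.natCast_eq_zero_iff, Nat.Prime.dvd_factorial Fact.out]
    omega
  exact mem_support_iff.mp ha ((mul_eq_zero.mp hzero).resolve_right hfact)

end Polynomial

theorem stmt_18_general (p : ℕ) (hp : p.Prime) (n k : ℕ)
    (φ : (Fin n → ZMod p) → ℂ) (hφ : IsPhasePoly k φ) (hroot : ∀ x, φ x ^ p = 1) :
    ∃ P : MvPolynomial (Fin n) (ZMod p), P.totalDegree ≤ k ∧
      ∀ x, φ x = Complex.exp (2 * Real.pi * Complex.I *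
        (((MvPolynomial.eval x P).val : ℂ) / (p : ℂ))) := by
  have : Fact p.Prime := ⟨hp⟩
  choose l hl using fun x => ZMod.exists_stdAddChar_eq (hroot x)
  have hφl : φ = ZMod.stdAddChar ∘ l := funext fun x => (hl x).symm
  obtain ⟨P, hPdeg, hPl⟩ : ∃ P ∈ restrictDegree (Fin n) (ZMod p) (p - 1),
      evalₗ (ZMod p) (Fin n) P = l := by
    have h := map_restrict_dom_evalₗ (σ := Fin n) (K := ZMod p)
    rw [ZMod.card] at h
    exact Submodule.mem_map.mp (h ▸ Submodule.mem_top)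
  have hPeval : (fun x => eval x P) = l := hPl
  refine ⟨P, totalDegree_le_of_iteratedFwdDiff_eval_eq_zero P hPdeg fun L hL => ?_, fun x => ?_⟩
  · rw [hPeval]
    exact iteratedFwdDiff_eq_zero_of_isPhasePoly ZMod.injective_stdAddChar (hφl ▸ hφ) L hL
  · rw [hφl, comp_apply, ← congrFun hPeval x, ZMod.stdAddChar_apply, ZMod.toCircle_apply,
      mul_div_assoc]

/-- A phase polynomial of degree `k ≤ p-1` on `(ℤ/pℤ)ⁿ` with values in `p`-th
roots of unity is the exponential of a polynomial of total degree at most `k`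
over `𝔽_p`. -/
theorem stmt_18 (p : ℕ) (hp : p.Prime) (n k : ℕ) (hk : k ≤ p - 1)
    (φ : (Fin n → ZMod p) → ℂ) (hφ : IsPhasePoly k φ) (hroot : ∀ x, φ x ^ p = 1) :
    ∃ P : MvPolynomial (Fin n) (ZMod p), P.totalDegree ≤ k ∧
      ∀ x, φ x = Complex.exp (2 * Real.pi * Complex.I *
        (((MvPolynomial.eval x P).val : ℂ) / (p : ℂ))) :=
  stmt_18_general p hp n k φ hφ hroot
end
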